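/- Let f(r) = (Λ/3)r⁴ + (a²Λ/3 − 1)r² + 2mr − a² and let q₂(r, θ) = −a²sin²θ·f(r)·(1 + (a²Λ/3)cos²θ)/((r² + a²cos²θ)m²) denote the Abdelqader–Lake invariant Q₂ of the Kerr–de Sitter black hole. Then: (i) if Λ > 0, a ≠ 0, m ≠ 0, θ ∈ (0, π) and r² + a²cos²θ > 0, then q₂(r, θ) = 0 if and only if f(r) = 0, i.e. Q₂ vanishes exactly at the stationary horizons; (ii) if Λ > 0, m > 0, a > 0 and a²Λ < 3, then f has exactly one negative real root, and the number of positive real roots of f, counted with multiplicity, is either 1 or 3. -/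
import Mathlib


noncomputable section

open Polynomial

/-- The horizon quartic `f(r) = (Λ/3)r⁴ + (a²Λ/3 − 1)r² + 2mr − a²` of the
Kerr–de Sitter black hole (so `f = −Δ_r/1`, its real roots are the stationary horizons). -/
def horizonFun (a m Λ r : ℝ) : ℝ :=
  Λ / 3 * r ^ 4 + (a ^ 2 * Λ / 3 - 1) * r ^ 2 + 2 * m * r - a ^ 2

/-- The Abdelqader–Lake invariant `Q₂` of the Kerr–de Sitter black hole (closed form). -/
def kdsQ2 (a m Λ r θ : ℝ) : ℝ :=
  -(a ^ 2 * Real.sin θ ^ 2 * horizonFun a m Λ r *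
      (1 + a ^ 2 * Λ / 3 * Real.cos θ ^ 2)) /
    ((r ^ 2 + a ^ 2 * Real.cos θ ^ 2) * m ^ 2)

/-- The horizon quartic as a polynomial, for root counting with multiplicity. -/
def horizonPoly (a m Λ : ℝ) : Polynomial ℝ :=
  C (Λ / 3) * X ^ 4 + C (a ^ 2 * Λ / 3 - 1) * X ^ 2 + C (2 * m) * X - C (a ^ 2)

lemma eval_horizonPoly (a m Λ x : ℝ) :
    (horizonPoly a m Λ).eval x = horizonFun a m Λ x := by
  simp [horizonPoly, horizonFun]

lemma natDegree_horizonPoly (a m Λ : ℝ) (hΛ : 0 < Λ) :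
    (horizonPoly a m Λ).natDegree = 4 := by
  unfold horizonPoly
  compute_degree!
  positivity

lemma horizonPoly_ne_zero (a m Λ : ℝ) (hΛ : 0 < Λ) : horizonPoly a m Λ ≠ 0 := by
  intro h
  have := natDegree_horizonPoly a m Λ hΛ
  rw [h] at this
  simp at this

lemma deriv_horizonPoly (a m Λ : ℝ) :
    derivative (horizonPoly a m Λ) =
      C (Λ / 3 * 4) * X ^ 3 + C ((a ^ 2 * Λ / 3 - 1) * 2) * X + C (2 * m) := by
  unfold horizonPoly
  simp [derivative_pow]
  ring

lemma horizon_big (a m Λ : ℝ) (hΛ : 0 < Λ) (hm : 0 < m) (ha : 0 < a) :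
    ∃ T : ℝ, 0 < T ∧ 0 < horizonFun a m Λ T ∧ 0 < horizonFun a m Λ (-T) := by
  obtain ⟨T, h1T, hST, hT2⟩ :
      ∃ T : ℝ, 1 ≤ T ∧ 1 + 2 * m + a ^ 2 ≤ T ∧ 3 * (1 + 2 * m + a ^ 2) / Λ ≤ T ^ 2 := by
    refine ⟨Real.sqrt (3 * (1 + 2 * m + a ^ 2) / Λ) + (1 + 2 * m + a ^ 2), ?_, ?_, ?_⟩
    · nlinarith [Real.sqrt_nonneg (3 * (1 + 2 * m + a ^ 2) / Λ), sq_nonneg a]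
    · nlinarith [Real.sqrt_nonneg (3 * (1 + 2 * m + a ^ 2) / Λ)]
    · have h0 : Real.sqrt (3 * (1 + 2 * m + a ^ 2) / Λ) ^ 2 = 3 * (1 + 2 * m + a ^ 2) / Λ :=
        Real.sq_sqrt (by positivity)
      nlinarith [Real.sqrt_nonneg (3 * (1 + 2 * m + a ^ 2) / Λ), sq_nonneg a]
  have hLT : 1 + 2 * m + a ^ 2 ≤ Λ / 3 * T ^ 2 := by
    rw [div_le_iff₀ hΛ] at hT2
    linarith
  have hTpos : 0 < T := lt_of_lt_of_le one_pos h1T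
  have hT1' : 1 < T := by nlinarith
  have key : (1 + 2 * m + a ^ 2) * T ^ 2 ≤ Λ / 3 * T ^ 2 * T ^ 2 :=
    mul_le_mul_of_nonneg_right hLT (sq_nonneg T)
  refine ⟨T, hTpos, ?_, ?_⟩ <;>
  · unfold horizonFun
    nlinarith [key, mul_pos (mul_pos hm hTpos) (sub_pos.mpr hT1'), sq_nonneg a,
      mul_nonneg (mul_nonneg (sq_nonneg a) hΛ.le) (sq_nonneg T), sq_nonneg (T - 1)]

lemma no_two_neg_roots (a m Λ : ℝ) (hΛ : 0 < Λ) (hm : 0 < m) (ha : 0 < a)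
    {x y : ℝ} (hx : x < 0) (hy : y < 0) (hxy : x < y)
    (hfx : horizonFun a m Λ x = 0) (hfy : horizonFun a m Λ y = 0) : False := by
  unfold horizonFun at hfx hfy
  have key : Λ/3*(x^2*y^2*(x^2-y^2)) + 2*m*(x*y*(y-x)) + a^2*(x^2-y^2) = 0 := by
    linear_combination y^2*hfx - x^2*hfy
  have hx2 : 0 < x ^ 2 := by nlinarith
  have hy2 : 0 < y ^ 2 := by nlinarith
  have h1 : 0 < x ^ 2 - y ^ 2 := by nlinarith
  have h2 : 0 < x * y := mul_pos_of_neg_of_neg hx hy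
  have p1 : 0 < Λ/3*(x^2*y^2*(x^2-y^2)) :=
    mul_pos (by positivity) (mul_pos (mul_pos hx2 hy2) h1)
  have p2 : 0 < 2*m*(x*y*(y-x)) :=
    mul_pos (by positivity) (mul_pos h2 (sub_pos.mpr hxy))
  have p3 : 0 < a^2*(x^2-y^2) := mul_pos (by positivity) h1
  linarith

lemma no_double_neg_root (a m Λ : ℝ) (hΛ : 0 < Λ) (hm : 0 < m)
    {x : ℝ} (hx : x < 0) (hfx : horizonFun a m Λ x = 0)
    (hdx : Λ / 3 * 4 * x ^ 3 + (a ^ 2 * Λ / 3 - 1) * 2 * x + 2 * m = 0) : False := by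
  unfold horizonFun at hfx
  have key : 2*Λ/3*x^4 - 2*m*x + 2*a^2 = 0 := by linear_combination x*hdx - 2*hfx
  nlinarith [sq_nonneg (x^2), mul_pos hm (neg_pos.mpr hx), sq_nonneg x]

lemma horizon_continuous (a m Λ : ℝ) : Continuous (horizonFun a m Λ) := by
  unfold horizonFun
  fun_prop

/-- (i) For `Λ > 0`, `a ≠ 0`, `m ≠ 0`, `θ ∈ (0, π)` and
`r² + a²cos²θ > 0`, the invariant `Q₂` of the Kerr–de Sitter black hole vanishes iff
`f(r) = 0`, i.e. exactly at the stationary horizons.  (ii) For `Λ > 0`, `m > 0`, `a > 0`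
and `a²Λ < 3`, the quartic `f` has exactly one negative real root, and the number of its
positive real roots, counted with multiplicity, is either `1` or `3`
(Descartes' rule of signs). -/
theorem kdsQ2_horizon_detector (a m Λ : ℝ) :
    (∀ r θ : ℝ, 0 < Λ → a ≠ 0 → m ≠ 0 → θ ∈ Set.Ioo 0 Real.pi →
      0 < r ^ 2 + a ^ 2 * Real.cos θ ^ 2 →
      (kdsQ2 a m Λ r θ = 0 ↔ horizonFun a m Λ r = 0)) ∧
    (0 < Λ → 0 < m → 0 < a → a ^ 2 * Λ < 3 →
      Multiset.card ((horizonPoly a m Λ).roots.filter fun x => x < 0) = 1 ∧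
      (Multiset.card ((horizonPoly a m Λ).roots.filter fun x => 0 < x) = 1 ∨
        Multiset.card ((horizonPoly a m Λ).roots.filter fun x => 0 < x) = 3)) := by
  constructor
  · intro r θ hΛ ha hm hθ hd
    have hs : 0 < Real.sin θ := Real.sin_pos_of_pos_of_lt_pi hθ.1 hθ.2
    have h1 : 0 < 1 + a ^ 2 * Λ / 3 * Real.cos θ ^ 2 := by positivity
    have hden : ((r ^ 2 + a ^ 2 * Real.cos θ ^ 2) * m ^ 2) ≠ 0 := by positivity
    rw [kdsQ2, _root_.div_eq_zero_iff]
    constructor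
    · rintro (h | h)
      · have h' := neg_eq_zero.mp h
        rcases mul_eq_zero.mp h' with h'' | h''
        · rcases mul_eq_zero.mp h'' with h3 | h3
          · rcases mul_eq_zero.mp h3 with h4 | h4
            · exact absurd h4 (by positivity)
            · exact absurd h4 (by positivity)
          · exact h3
        · exact absurd h'' h1.ne'
      · exact absurd h hden
    · intro h
      left
      rw [h]
      ring
  · intro hΛ hm ha haΛ
    classical
    set p := horizonPoly a m Λ with hp
    have hp0 : p ≠ 0 := horizonPoly_ne_zero a m Λ hΛ
    have hdeg : p.natDegree = 4 := natDegree_horizonPoly a m Λ hΛ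
    -- no zero roots
    have hzero : ∀ x ∈ p.roots, x ≠ 0 := by
      intro x hxr hx0
      have := (mem_roots hp0).mp hxr
      rw [IsRoot, eval_horizonPoly] at this
      rw [hx0] at this
      unfold horizonFun at this
      nlinarith [sq_nonneg a]
    -- get big T
    obtain ⟨T, hT, hfT, hfT'⟩ := horizon_big a m Λ hΛ hm ha
    have hf0 : horizonFun a m Λ 0 < 0 := by
      unfold horizonFun; nlinarith [sq_nonneg a]
    have hcont : ∀ s : Set ℝ, ContinuousOn (horizonFun a m Λ) s :=
      fun s => (horizon_continuous a m Λ).continuousOn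
    -- a negative root
    obtain ⟨xn, hxn, hxnr⟩ : ∃ x, x ∈ Set.Ioo (-T) 0 ∧ horizonFun a m Λ x = 0 := by
      have := intermediate_value_Ioo' (by linarith : -T ≤ (0:ℝ)) (hcont _)
      obtain ⟨x, hx, hfx⟩ := this ⟨hf0, hfT'⟩
      exact ⟨x, hx, hfx⟩
    -- a positive root
    obtain ⟨xp, hxp, hxpr⟩ : ∃ x, x ∈ Set.Ioo 0 T ∧ horizonFun a m Λ x = 0 := by
      have := intermediate_value_Ioo (le_of_lt hT) (hcont _)
      obtain ⟨x, hx, hfx⟩ := this ⟨hf0, hfT⟩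
      exact ⟨x, hx, hfx⟩
    have hmem : ∀ x : ℝ, horizonFun a m Λ x = 0 → x ∈ p.roots := by
      intro x hx
      exact (mem_roots hp0).mpr (by rw [IsRoot, eval_horizonPoly]; exact hx)
    -- negative root count = 1
    have hB1 : 1 ≤ Multiset.card (p.roots.filter fun x => x < 0) := by
      exact Multiset.card_pos_iff_exists_mem.mpr
        ⟨xn, Multiset.mem_filter.mpr ⟨hmem _ hxnr, hxn.2⟩⟩
    have hBle : Multiset.card (p.roots.filter fun x => x < 0) ≤ 1 := by
      by_contra hc
      push_neg at hc
      set S := p.roots.filter fun x => x < 0 with hSdef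
      have hS2 : 2 ≤ Multiset.card S := hc
      have hSne : S ≠ 0 := by
        intro h; rw [h] at hS2; simp at hS2
      obtain ⟨x, hxS⟩ := Multiset.exists_mem_of_ne_zero hSne
      obtain ⟨t, ht⟩ := Multiset.exists_cons_of_mem hxS
      have htne : t ≠ 0 := by
        intro h
        rw [ht, h] at hS2
        simp at hS2
      obtain ⟨y, hyt⟩ := Multiset.exists_mem_of_ne_zero htne
      have hyS : y ∈ S := by rw [ht]; exact Multiset.mem_cons_of_mem hyt
      have hxprop := Multiset.mem_filter.mp hxS
      have hyprop := Multiset.mem_filter.mp hyS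
      have hxroot : horizonFun a m Λ x = 0 := by
        have := (mem_roots hp0).mp hxprop.1
        rwa [IsRoot, eval_horizonPoly] at this
      have hyroot : horizonFun a m Λ y = 0 := by
        have := (mem_roots hp0).mp hyprop.1
        rwa [IsRoot, eval_horizonPoly] at this
      rcases eq_or_ne x y with rfl | hxy
      · -- double root
        have hcnt : 2 ≤ S.count x := by
          rw [ht, Multiset.count_cons_self]
          have : 1 ≤ t.count x := Multiset.one_le_count_iff_mem.mpr hyt
          omega
        have hcnt' : 2 ≤ p.roots.count x :=
          le_trans hcnt (Multiset.count_le_of_le x (Multiset.filter_le _ _))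
        rw [count_roots] at hcnt'
        have hder : (derivative^[1] p).IsRoot x :=
          isRoot_iterate_derivative_of_lt_rootMultiplicity (by omega)
        rw [Function.iterate_one] at hder
        rw [IsRoot, hp, deriv_horizonPoly] at hder
        simp only [eval_add, eval_mul, eval_C, eval_pow, eval_X] at hder
        exact no_double_neg_root a m Λ hΛ hm hxprop.2 hxroot hder
      · rcases hxy.lt_or_gt with h | h
        · exact no_two_neg_roots a m Λ hΛ hm ha hxprop.2 hyprop.2 h hxroot hyroot
        · exact no_two_neg_roots a m Λ hΛ hm ha hyprop.2 hxprop.2 h hyroot hxroot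
    have hB : Multiset.card (p.roots.filter fun x => x < 0) = 1 := le_antisymm hBle hB1
    refine ⟨hB, ?_⟩
    -- positive root count
    have hA1 : 1 ≤ Multiset.card (p.roots.filter fun x => 0 < x) := by
      exact Multiset.card_pos_iff_exists_mem.mpr
        ⟨xp, Multiset.mem_filter.mpr ⟨hmem _ hxpr, hxp.1⟩⟩
    have hsplit : Multiset.card (p.roots.filter fun x => x < 0) +
        Multiset.card (p.roots.filter fun x => 0 < x) = Multiset.card p.roots := by
      have h1 : (p.roots.filter fun x => x < 0) + (p.roots.filter fun x => ¬ x < 0) = p.roots :=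
        Multiset.filter_add_not _ _
      have h2 : (p.roots.filter fun x => ¬ x < 0) = (p.roots.filter fun x => 0 < x) := by
        apply Multiset.filter_congr
        intro x hx
        have := hzero x hx
        constructor
        · intro h'; rcases lt_trichotomy x 0 with h | h | h
          · exact absurd h h'
          · exact absurd h this
          · exact h
        · intro h'; exact not_lt.mpr h'.le
      calc Multiset.card (p.roots.filter fun x => x < 0) +
            Multiset.card (p.roots.filter fun x => 0 < x)
          = Multiset.card ((p.roots.filter fun x => x < 0) +
              (p.roots.filter fun x => ¬ x < 0)) := by rw [Multiset.card_add, h2]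
        _ = Multiset.card p.roots := by rw [h1]
    have hle4 : Multiset.card p.roots ≤ 4 := hdeg ▸ p.card_roots'
    have hne3 : Multiset.card p.roots ≠ 3 := by
      intro h3
      obtain ⟨q, hq, hqdeg, hq0⟩ := p.exists_prod_multiset_X_sub_C_mul
      rw [h3, hdeg] at hqdeg
      have hqd : q.natDegree = 1 := by omega
      have hqdeg' : q.degree = 1 :=
        (degree_eq_iff_natDegree_eq_of_pos one_pos).mpr hqd
      obtain ⟨z, hz⟩ := exists_root_of_degree_eq_one hqdeg'
      have hqne : q ≠ 0 := fun h => by simp [h] at hqd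
      have : z ∈ q.roots := (mem_roots hqne).mpr hz
      rw [hq0] at this
      simp at this
    omega
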